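/- arXiv:2603.22445 — 2 statements merged into one kernel-verified Lean document; each statement's English description precedes it below -/
import Mathlib

section
/- Let h : ℝ → ℝ be differentiable, r > 0, k > 0, and suppose h(0) < 0 and the derivative satisfies d/dt (h(t) - r) ≥ -k·(h(t) - r) for all t ≥ 0. If t_f > 0 satisfies r ≥ (r - h(0))·exp(-k·t_f), then h(t_f) ≥ 0. -/
open Real

theorem mul_exp_neg_le_of_deriv_ge {f : ℝ → ℝ} {k : ℝ} (hf : Differentiable ℝ f)
    (hderiv : ∀ t ≥ (0 : ℝ), -k * f t ≤ deriv f t) {t : ℝ} (ht : 0 ≤ t) :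
    f 0 * exp (-k * t) ≤ f t := by
  -- Grönwall's inequality in Mathlib is an upper bound, so it is applied to `-f`.
  have hgronwall := le_gronwallBound_of_liminf_deriv_right_le (f := fun s => -f s)
    (f' := fun s => -deriv f s) (δ := -f 0) (K := -k) (ε := 0) (a := 0) (b := t)
    hf.continuous.neg.continuousOn
    (fun x _ r hr => by
      simpa [slope_def_field, div_eq_inv_mul] using
        (hf x).hasDerivAt.neg.hasDerivWithinAt.liminf_right_slope_le hr)
    le_rfl (fun x hx => by linarith [hderiv x hx.1]) t ⟨ht, le_rfl⟩
  rw [gronwallBound_ε0, sub_zero] at hgronwall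
  linarith

theorem stmt1_general (h : ℝ → ℝ) (hdiff : Differentiable ℝ h) (r k t_f : ℝ)
    (hineq : ∀ t ≥ (0 : ℝ), deriv (fun t => h t - r) t ≥ -k * (h t - r))
    (htf : 0 < t_f) (hcond : r ≥ (r - h 0) * Real.exp (-k * t_f)) :
    h t_f ≥ 0 := by
  have hcomparison := mul_exp_neg_le_of_deriv_ge (hdiff.sub_const r) hineq htf.le
  linarith

theorem stmt1 (h : ℝ → ℝ) (hdiff : Differentiable ℝ h) (r k t_f : ℝ)
    (hr : 0 < r) (hk : 0 < k) (h0 : h 0 < 0)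
    (hineq : ∀ t ≥ (0 : ℝ), deriv (fun t => h t - r) t ≥ -k * (h t - r))
    (htf : 0 < t_f) (hcond : r ≥ (r - h 0) * Real.exp (-k * t_f)) :
    h t_f ≥ 0 :=
  stmt1_general h hdiff r k t_f hineq htf hcond
end

section
/- Let b : ℝ → ℝ be differentiable with b(0) ≥ 0 and b'(t) ≥ -α(b(t)) for all t ≥ 0, where α : ℝ → ℝ is locally Lipschitz, strictly increasing, and α(0) = 0. Then b(t) ≥ 0 for all t ≥ 0. -/
theorem stmt12 (b : ℝ → ℝ) (hdiff : Differentiable ℝ b) (hb0 : 0 ≤ b 0)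
    (α : ℝ → ℝ) (hlip : LocallyLipschitz α) (hmono : StrictMono α) (hα0 : α 0 = 0)
    (hineq : ∀ t ≥ (0 : ℝ), deriv b t ≥ -α (b t)) :
    ∀ t ≥ (0 : ℝ), 0 ≤ b t := by
  intro t₀ ht₀
  by_contra h
  push_neg at h
  set S : Set ℝ := Set.Icc 0 t₀ ∩ b ⁻¹' Set.Ici 0 with hS
  have hne : S.Nonempty := ⟨0, ⟨le_refl 0, ht₀⟩, hb0⟩
  have hbdd : BddAbove S := ⟨t₀, fun x hx => hx.1.2⟩
  have hclosed : IsClosed S :=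
    isClosed_Icc.inter (isClosed_Ici.preimage hdiff.continuous)
  set s := sSup S with hs
  have hsS : s ∈ S := hclosed.csSup_mem hne hbdd
  have hs0 : 0 ≤ s := hsS.1.1
  have hbs : 0 ≤ b s := hsS.2
  have hst : s < t₀ := by
    rcases lt_or_eq_of_le hsS.1.2 with h' | h'
    · exact h'
    · exact absurd (h' ▸ hbs) (not_le.mpr h)
  have hneg : ∀ t ∈ Set.Ioo s t₀, b t < 0 := by
    intro t ht
    by_contra hbt
    push_neg at hbt
    have : t ∈ S := ⟨⟨hs0.trans ht.1.le, ht.2.le⟩, hbt⟩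
    exact absurd (le_csSup hbdd this) (not_le.mpr ht.1)
  have hmonoB : StrictMonoOn b (Set.Icc s t₀) := by
    apply strictMonoOn_of_deriv_pos (convex_Icc s t₀) hdiff.continuous.continuousOn
    intro t ht
    rw [interior_Icc] at ht
    have h1 : α (b t) < 0 := hα0 ▸ hmono (hneg t ht)
    have := hineq t (hs0.trans ht.1.le)
    linarith
  have : b s < b t₀ := hmonoB ⟨le_refl s, hst.le⟩ ⟨hst.le, le_refl t₀⟩ hst
  linarith
end
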